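/- Let n ≥ 4 be even, let p₁,…,p_{n−1} be odd integers and p_n ≠ 0 an even integer, and let M be the symmetrized Seifert linking matrix of the pretzel knot P(p₁,…,p_n) as defined in the context. Then there exists an invertible N×N matrix P over ℚ such that Pᵀ M P is the diagonal matrix whose diagonal entries are: −sign(p_i)·k·(k+1) for each 1 ≤ i ≤ n and each 1 ≤ k ≤ |p_i|−1, together with the single entry −(p₁⋯p_n) · σ_{n−1}(p₁,…,p_n). -/

import Mathlib

open Matrix


/-- `esym p a b j` is the `j`-th elementary symmetric polynomial of the values
`p a, p (a+1), …, p (b-1)`; in the 1-indexed notation of the paper, where `p i`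
denotes `p_{i+1}`, this is `σ_j(p_{a+1},…,p_b)`. -/
def esym (p : ℕ → ℤ) (a b j : ℕ) : ℤ :=
  ∑ s ∈ (Finset.Ico a b).powersetCard j, ∏ i ∈ s, p i

/-- `sgn p i = s_{i+1} = -sign(p_{i+1})` in the 1-indexed notation of the paper. -/
def sgn (p : ℕ → ℤ) (i : ℕ) : ℤ := -(p i).sign

/-- Index type for the symmetrized Seifert linking matrix of the pretzel knot
`P(p₁,…,pₙ)` with `n` even: pairs `(i,k)` with `1 ≤ i ≤ n`, `1 ≤ k ≤ |p_i|−1`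
(0-indexed here), together with one extra index `γ = Sum.inr ()`.  Its cardinality
is `N = ρ₁+⋯+ρₙ+1` where `ρ_i = |p_i|−1`. -/
abbrev QIdx (n : ℕ) (p : ℕ → ℤ) : Type :=
  (Σ i : Fin n, Fin ((p i).natAbs - 1)) ⊕ Unit

/-- Entries of the symmetrized Seifert linking matrix `M` of `P(p₁,…,pₙ)` (`n` even):
`M[(i,k),(i,k)] = 2s_i`, `M[(i,k),(i,l)] = s_i` for `k ≠ l`, `M[(i,k),(j,l)] = 0` for
`i ≠ j`, `M[(i,k),γ] = M[γ,(i,k)] = s_i`, `M[γ,γ] = s₁+⋯+sₙ`. -/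
def linkEf (n : ℕ) (p : ℕ → ℤ) : QIdx n p → QIdx n p → ℤ
  | Sum.inl ⟨i, k⟩, Sum.inl ⟨j, l⟩ =>
      if (i : ℕ) = (j : ℕ) then (if (k : ℕ) = (l : ℕ) then 2 * sgn p i else sgn p i) else 0
  | Sum.inl ⟨i, _⟩, Sum.inr _ => sgn p i
  | Sum.inr _, Sum.inl ⟨i, _⟩ => sgn p i
  | Sum.inr _, Sum.inr _ => ∑ i ∈ Finset.range n, sgn p i

/-- The symmetrized Seifert linking matrix of the pretzel knot `P(p₁,…,pₙ)`, `n` even. -/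
def linkE (n : ℕ) (p : ℕ → ℤ) : Matrix (QIdx n p) (QIdx n p) ℤ :=
  Matrix.of (linkEf n p)

/-- The diagonal entries of the diagonalization: `−sign(p_i)·k·(k+1)` at each index
`(i,k)`, and `−(p₁⋯pₙ)·σ_{n−1}(p₁,…,pₙ)` at `γ`. -/
def diagEven (n : ℕ) (p : ℕ → ℤ) : QIdx n p → ℤ :=
  Sum.elim
    (fun w => -(p w.1).sign * (((w.2 : ℕ) : ℤ) + 1) * (((w.2 : ℕ) : ℤ) + 2))
    (fun _ => -(∏ i ∈ Finset.range n, p i) * esym p 0 n (n - 1))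

open Finset

namespace Stmt9Aux

/-- column vector entries: `vv k l` is the `l`-th entry of the `k`-th column vector. -/
def vv (k l : ℕ) : ℚ := (if l ≤ k then 1 else 0) + (if l = k + 1 then -((k:ℚ)+1) else 0)

/-- `ss r k` is the sum of the entries of the `k`-th column vector of length `r`. -/
def ss (r k : ℕ) : ℚ := if k + 1 = r then (r:ℚ) else 0

lemma sum_ind_le (r k : ℕ) (hk : k < r) (c : ℚ) :
    (∑ l ∈ range r, if l ≤ k then c else 0) = ((k:ℚ)+1) * c := by
  have h : (∑ l ∈ range r, if l ≤ k then c else 0) = ∑ l ∈ range r, (if l ∈ range (k+1) then c else 0) := by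
    apply sum_congr rfl; intro l _; simp [mem_range, Nat.lt_succ_iff]
  rw [h, Finset.sum_ite_mem]
  have : range r ∩ range (k+1) = range (k+1) := by
    apply Finset.inter_eq_right.mpr; intro x hx; simp only [mem_range] at *; omega
  rw [this, Finset.sum_const, card_range]
  push_cast; ring

lemma sum_ind_eq (r a : ℕ) (c : ℚ) :
    (∑ l ∈ range r, if l = a then c else 0) = if a < r then c else 0 := by
  rw [Finset.sum_ite_eq' (range r) a (fun _ => c)]; simp [mem_range]

lemma sum_vv (r k : ℕ) (hk : k < r) : ∑ l ∈ range r, vv k l = ss r k := by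
  unfold vv ss
  rw [Finset.sum_add_distrib, sum_ind_le r k hk, sum_ind_eq]
  split_ifs with h1 h2 h3 <;> try (exfalso; omega)
  · ring
  · have : r = k + 1 := h3.symm
    subst this; push_cast; ring

lemma sum_row_vv (r j k : ℕ) (hj : j < r) (hk : k < r) (s : ℚ) :
    (∑ l ∈ range r, (if j = l then 2 * s else s) * vv k l) = s * (ss r k + vv k j) := by
  have h : ∀ l, (if j = l then 2 * s else s) * vv k l
      = s * vv k l + (if l = j then s * vv k l else 0) := by
    intro l
    by_cases hl : j = l
    · subst hl; simp; ring
    · simp [hl, Ne.symm hl]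
  simp only [h]
  rw [Finset.sum_add_distrib, ← Finset.mul_sum, sum_vv r k hk,
    Finset.sum_ite_eq' (range r) j (fun l => s * vv k l)]
  simp [mem_range.mpr hj]; ring

lemma key2_le (r j k : ℕ) (hj : j < r) (hk : k < r) (hjk : j ≤ k) :
    (∑ l ∈ range r, vv j l * vv k l) + ss r j * ss r k
      = if j = k then ((j:ℚ)+1) * ((j:ℚ)+2) else 0 := by
  have hexp : ∀ l, vv j l * vv k l =
      (if l ≤ j ∧ l ≤ k then (1:ℚ) else 0)
      + (if l ≤ j ∧ l = k + 1 then -((k:ℚ)+1) else 0)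
      + ((if l = j + 1 ∧ l ≤ k then -((j:ℚ)+1) else 0)
      + (if l = j + 1 ∧ l = k + 1 then ((j:ℚ)+1) * ((k:ℚ)+1) else 0)) := by
    intro l
    unfold vv
    rw [add_mul, mul_add, mul_add, ite_zero_mul_ite_zero, ite_zero_mul_ite_zero,
      ite_zero_mul_ite_zero, ite_zero_mul_ite_zero]
    simp only [one_mul, mul_one, neg_mul_neg]
  simp only [hexp]
  rw [Finset.sum_add_distrib, Finset.sum_add_distrib, Finset.sum_add_distrib]
  have e1 : (∑ l ∈ range r, if l ≤ j ∧ l ≤ k then (1:ℚ) else 0) = (j:ℚ) + 1 := by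
    have : ∀ l, (if l ≤ j ∧ l ≤ k then (1:ℚ) else 0) = if l ≤ j then (1:ℚ) else 0 := by
      intro l; apply if_congr ?_ rfl rfl; constructor
      · exact fun h => h.1
      · exact fun h => ⟨h, le_trans h hjk⟩
    simp only [this]; rw [sum_ind_le r j hj]; ring
  have e2 : (∑ l ∈ range r, if l ≤ j ∧ l = k + 1 then -((k:ℚ)+1) else 0) = 0 := by
    apply Finset.sum_eq_zero; intro l _
    rw [if_neg]; rintro ⟨h1, h2⟩; omega
  have e3 : (∑ l ∈ range r, if l = j + 1 ∧ l ≤ k then -((j:ℚ)+1) else 0)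
      = if j < k then -((j:ℚ)+1) else 0 := by
    have : ∀ l, (if l = j + 1 ∧ l ≤ k then -((j:ℚ)+1) else 0)
        = if l = j + 1 then (if j < k then -((j:ℚ)+1) else 0) else 0 := by
      intro l; by_cases hl : l = j + 1
      · subst hl; simp only [true_and, if_pos rfl]
        rcases Nat.lt_or_ge j k with h | h
        · simp [h, show j + 1 ≤ k by omega]
        · simp [show ¬ j < k by omega, show ¬ j + 1 ≤ k by omega]
      · simp [hl]
    simp only [this]; rw [sum_ind_eq]
    rcases Nat.lt_or_ge (j+1) r with h | h
    · rw [if_pos h]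
    · simp [show ¬ j + 1 < r by omega, show ¬ j < k by omega]
  have e4 : (∑ l ∈ range r, if l = j + 1 ∧ l = k + 1 then ((j:ℚ)+1) * ((k:ℚ)+1) else 0)
      = if j = k ∧ j + 1 < r then ((j:ℚ)+1) * ((k:ℚ)+1) else 0 := by
    have : ∀ l, (if l = j + 1 ∧ l = k + 1 then ((j:ℚ)+1) * ((k:ℚ)+1) else 0)
        = if l = j + 1 then (if j = k then ((j:ℚ)+1) * ((k:ℚ)+1) else 0) else 0 := by
      intro l; by_cases hl : l = j + 1
      · subst hl; by_cases h : j = k <;> simp [h]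
      · simp [hl]
    simp only [this]; rw [sum_ind_eq]
    split_ifs <;> first | rfl | (exfalso; omega)
  rw [e1, e2, e3, e4]
  unfold ss
  rcases eq_or_lt_of_le hjk with h | h
  · subst h
    rw [if_pos rfl, if_neg (lt_irrefl j)]
    rcases Nat.lt_or_ge (j+1) r with h1 | h1
    · rw [if_pos (⟨rfl, h1⟩ : j = j ∧ j + 1 < r), if_neg (by omega : ¬ j + 1 = r)]
      push_cast; ring
    · have hr : j + 1 = r := by omega
      rw [if_neg (fun hc => by omega : ¬ (j = j ∧ j + 1 < r)), if_pos hr, ← hr]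
      push_cast; ring
  · rw [if_pos h, if_neg (by omega : ¬ j = k),
      if_neg (fun hc => by omega : ¬ (j = k ∧ j + 1 < r)), if_neg (by omega : ¬ j + 1 = r)]
    push_cast; ring

lemma key2 (r j k : ℕ) (hj : j < r) (hk : k < r) :
    (∑ l ∈ range r, vv j l * vv k l) + ss r j * ss r k
      = if j = k then ((j:ℚ)+1) * ((j:ℚ)+2) else 0 := by
  rcases le_total j k with h | h
  · exact key2_le r j k hj hk h
  · have h2 := key2_le r k j hk hj h
    calc (∑ l ∈ range r, vv j l * vv k l) + ss r j * ss r k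
        = (∑ l ∈ range r, vv k l * vv j l) + ss r k * ss r j := by
          rw [mul_comm (ss r j)]
          exact congrArg (· + ss r k * ss r j)
            (Finset.sum_congr rfl fun l _ => mul_comm _ _)
      _ = if k = j then ((k:ℚ)+1) * ((k:ℚ)+2) else 0 := h2
      _ = if j = k then ((j:ℚ)+1) * ((j:ℚ)+2) else 0 := by
          by_cases hjk : j = k
          · subst hjk; rfl
          · rw [if_neg hjk, if_neg (Ne.symm hjk)]

lemma sum_row_const (r j : ℕ) (hj : j < r) (s C : ℚ) :
    (∑ l ∈ range r, (if j = l then 2 * s else s) * C) = s * C * ((r:ℚ) + 1) := by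
  have h : ∀ l, (if j = l then 2 * s else s) * C = s * C + (if l = j then s * C else 0) := by
    intro l
    by_cases hl : j = l
    · subst hl; simp; ring
    · simp [hl, Ne.symm hl]
  simp only [h]
  rw [Finset.sum_add_distrib, Finset.sum_const, card_range, sum_ind_eq, if_pos hj]
  push_cast; ring

lemma powersetCard_pred {α : Type*} [DecidableEq α] (u : Finset α) (hu : 1 ≤ u.card) :
    u.powersetCard (u.card - 1) = u.image (u.erase ·) := by
  ext t
  simp only [Finset.mem_powersetCard, Finset.mem_image]
  constructor
  · rintro ⟨hsub, hcard⟩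
    have hc : (u \ t).card = 1 := by
      rw [Finset.card_sdiff_of_subset hsub, hcard]; omega
    obtain ⟨a, ha⟩ := Finset.card_eq_one.mp hc
    have hau : a ∈ u := by
      have : a ∈ u \ t := ha ▸ Finset.mem_singleton_self a
      exact (Finset.mem_sdiff.mp this).1
    refine ⟨a, hau, ?_⟩
    rw [Finset.erase_eq, ← ha, Finset.sdiff_sdiff_self_left,
      Finset.inter_eq_right.mpr hsub]
  · rintro ⟨a, ha, rfl⟩
    exact ⟨Finset.erase_subset _ _, Finset.card_erase_of_mem ha⟩

lemma esym_pred (p : ℕ → ℤ) (n : ℕ) (hn : 1 ≤ n) :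
    esym p 0 n (n - 1) = ∑ i ∈ range n, ∏ j ∈ (range n).erase i, p j := by
  unfold esym
  rw [show Finset.Ico 0 n = range n by rw [Finset.range_eq_Ico]]
  have hc : (range n).card = n := card_range n
  rw [show n - 1 = (range n).card - 1 by rw [hc],
    powersetCard_pred (range n) (by rw [hc]; omega)]
  rw [Finset.sum_image]
  intro x hx y hy hxy
  by_contra hne
  have hxm : x ∈ (range n).erase y := Finset.mem_erase.mpr ⟨hne, hx⟩
  rw [← show (range n).erase x = (range n).erase y from hxy] at hxm
  exact (Finset.mem_erase.mp hxm).1 rfl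

lemma esym_ne_zero (n : ℕ) (hn : 1 ≤ n) (p : ℕ → ℤ)
    (hpodd : ∀ i, i < n - 1 → Odd (p i)) (hpeven : Even (p (n - 1))) :
    esym p 0 n (n - 1) ≠ 0 := by
  have hmod : esym p 0 n (n - 1) % 2 = 1 := by
    rw [esym_pred p n hn, Finset.sum_int_mod]
    have hterm : ∀ i ∈ range n,
        (∏ j ∈ (range n).erase i, p j) % 2 = if i = n - 1 then 1 else 0 := by
      intro i hi
      by_cases h : i = n - 1
      · subst h
        have he : (range n).erase (n - 1) = range (n - 1) := by
          ext x; simp only [Finset.mem_erase, mem_range]; omega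
        rw [he, if_pos rfl, Finset.prod_int_mod]
        have h1 : ∀ j ∈ range (n - 1), p j % 2 = 1 :=
          fun j hj => Int.odd_iff.mp (hpodd j (mem_range.mp hj))
        rw [Finset.prod_congr rfl h1, Finset.prod_const_one]; decide
      · rw [if_neg h]
        have hdvd : (2:ℤ) ∣ ∏ j ∈ (range n).erase i, p j := by
          refine dvd_trans hpeven.two_dvd (Finset.dvd_prod_of_mem p ?_)
          refine Finset.mem_erase.mpr ⟨fun hc => h hc.symm, mem_range.mpr (by omega)⟩
        omega
    rw [Finset.sum_congr rfl hterm, Finset.sum_ite_eq' (range n) (n-1) (fun _ => (1:ℤ)),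
      if_pos (mem_range.mpr (by omega))]
    decide
  intro h0; rw [h0] at hmod; norm_num at hmod

/-- `Pr n p` is the product of the `p i`. -/
def Pr (n : ℕ) (p : ℕ → ℤ) : ℤ := ∏ t ∈ range n, p t

/-- `rho p i = |p i| - 1`. -/
def rho (p : ℕ → ℤ) (i : ℕ) : ℕ := (p i).natAbs - 1

/-- `cc n p i` is the block entry of the `γ` column of the congruence matrix. -/
noncomputable def cc (n : ℕ) (p : ℕ → ℤ) (i : ℕ) : ℚ :=
  -((Pr n p : ℤ) : ℚ) / ((p i).natAbs : ℚ)

/-- entries of the congruence matrix. -/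
noncomputable def Pmf (n : ℕ) (p : ℕ → ℤ) : QIdx n p → QIdx n p → ℚ
  | Sum.inl ⟨i, j⟩, Sum.inl ⟨i', k⟩ => if (i:ℕ) = (i':ℕ) then vv (k:ℕ) (j:ℕ) else 0
  | Sum.inl ⟨i, _⟩, Sum.inr _ => cc n p i
  | Sum.inr _, Sum.inl _ => 0
  | Sum.inr _, Sum.inr _ => ((Pr n p : ℤ) : ℚ)

/-- the congruence matrix. -/
noncomputable def Pm (n : ℕ) (p : ℕ → ℤ) : Matrix (QIdx n p) (QIdx n p) ℚ :=
  Matrix.of (Pmf n p)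

/-- entries of the product `M * P`. -/
noncomputable def Qmf (n : ℕ) (p : ℕ → ℤ) : QIdx n p → QIdx n p → ℚ
  | Sum.inl ⟨i, j⟩, Sum.inl ⟨i', k⟩ =>
      if (i:ℕ) = (i':ℕ) then (sgn p i : ℚ) * (ss (rho p i) (k:ℕ) + vv (k:ℕ) (j:ℕ)) else 0
  | Sum.inl _, Sum.inr _ => 0
  | Sum.inr _, Sum.inl ⟨i', k⟩ => (sgn p i' : ℚ) * ss (rho p i') (k:ℕ)
  | Sum.inr _, Sum.inr _ =>
      ∑ i ∈ range n, (sgn p i : ℚ) * ((rho p i : ℚ) * cc n p i + ((Pr n p : ℤ) : ℚ))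

/-- the product `M * P`. -/
noncomputable def Qm (n : ℕ) (p : ℕ → ℤ) : Matrix (QIdx n p) (QIdx n p) ℚ :=
  Matrix.of (Qmf n p)

lemma hp_ne_zero (n : ℕ) (hn : 4 ≤ n) (p : ℕ → ℤ)
    (hpodd : ∀ i, i < n - 1 → Odd (p i)) (hpne : p (n - 1) ≠ 0) :
    ∀ i, i < n → p i ≠ 0 := by
  intro i hi
  by_cases h : i = n - 1
  · subst h; exact hpne
  · intro h0
    have hodd := hpodd i (by omega)
    rw [h0] at hodd
    exact (Int.not_odd_iff_even.mpr Even.zero) hodd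

lemma natAbs_cast_q (p : ℕ → ℤ) (i : ℕ) (hp : p i ≠ 0) :
    ((rho p i : ℕ) : ℚ) + 1 = ((p i).natAbs : ℚ) := by
  unfold rho
  rw [Nat.cast_sub (Int.natAbs_pos.mpr hp)]
  push_cast; ring

lemma MP (n : ℕ) (p : ℕ → ℤ) (hp : ∀ i, i < n → p i ≠ 0) :
    (linkE n p).map (fun x : ℤ => (x : ℚ)) * Pm n p = Qm n p := by
  ext x y
  rw [Matrix.mul_apply, Fintype.sum_sum_type, ← Finset.univ_sigma_univ, Finset.sum_sigma]
  obtain (⟨i, j⟩ | u) := x <;> obtain (⟨i', k⟩ | u') := y <;>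
    simp only [linkE, Matrix.map_apply, Matrix.of_apply, linkEf, Pm, Pmf, Qm, Qmf,
      Finset.univ_unique, Finset.sum_singleton]
  -- case (i,j), (i',k)
  · by_cases hii : (i:ℕ) = (i':ℕ)
    · have hii' : i = i' := Fin.ext hii
      subst hii'
      rw [if_pos rfl]
      rw [Finset.sum_eq_single i ?hz ?hnm]
      case hz =>
        intro a _ ha
        refine Finset.sum_eq_zero fun b _ => ?_
        rw [if_neg (fun hc => ha (Fin.ext hc.symm))]
        simp
      case hnm => intro h; exact absurd (Finset.mem_univ i) h
      simp only [if_pos rfl, mul_zero, add_zero]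
      push_cast [apply_ite (fun z : ℤ => (z : ℚ))]
      rw [Fin.sum_univ_eq_sum_range
        (fun l => (if (j:ℕ) = l then 2 * ((sgn p (i:ℕ) : ℤ):ℚ) else ((sgn p (i:ℕ) : ℤ):ℚ))
          * vv (k:ℕ) l) ((p (i:ℕ)).natAbs - 1)]
      rw [sum_row_vv _ _ _ j.isLt k.isLt]
      rfl
    · rw [if_neg hii, mul_zero, add_zero]
      refine Finset.sum_eq_zero fun a _ => Finset.sum_eq_zero fun b _ => ?_
      by_cases h : (i:ℕ) = (a:ℕ)
      · rw [if_neg (by omega : ¬ (a:ℕ) = (i':ℕ)), mul_zero]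
      · rw [if_neg h]; simp
  -- case (i,j), γ
  · rw [Finset.sum_eq_single i ?hz ?hnm]
    case hz =>
      intro a _ ha
      refine Finset.sum_eq_zero fun b _ => ?_
      rw [if_neg (fun hc => ha (Fin.ext hc.symm))]
      simp
    case hnm => intro h; exact absurd (Finset.mem_univ i) h
    simp only [if_pos rfl]
    push_cast [apply_ite (fun z : ℤ => (z : ℚ))]
    rw [Fin.sum_univ_eq_sum_range
      (fun l => (if (j:ℕ) = l then 2 * ((sgn p (i:ℕ) : ℤ):ℚ) else ((sgn p (i:ℕ) : ℤ):ℚ))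
        * cc n p (i:ℕ)) ((p (i:ℕ)).natAbs - 1)]
    rw [sum_row_const _ _ j.isLt]
    have hA : (((p (i:ℕ)).natAbs : ℕ) : ℚ) ≠ 0 := by
      have := Int.natAbs_pos.mpr (hp (i:ℕ) i.isLt)
      positivity
    have hcast := natAbs_cast_q p (i:ℕ) (hp (i:ℕ) i.isLt)
    unfold rho at hcast
    rw [hcast]
    unfold cc
    field_simp
    ring
  -- case γ, (i',k)
  · rw [Finset.sum_eq_single i' ?hz ?hnm]
    case hz =>
      intro a _ ha
      refine Finset.sum_eq_zero fun b _ => ?_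
      rw [if_neg (fun hc => ha (Fin.ext hc))]
      simp
    case hnm => intro h; exact absurd (Finset.mem_univ i') h
    simp only [eq_self_iff_true, if_true, mul_zero, add_zero]
    rw [← Finset.mul_sum]
    rw [Fin.sum_univ_eq_sum_range (fun l => vv (k:ℕ) l) ((p (i':ℕ)).natAbs - 1)]
    rw [sum_vv _ _ k.isLt]
    rfl
  -- case γ, γ
  · simp only [Finset.sum_const, Finset.card_univ, Fintype.card_fin, nsmul_eq_mul]
    rw [Fin.sum_univ_eq_sum_range
      (fun l => (((p l).natAbs - 1 : ℕ) : ℚ) * (((sgn p l : ℤ) : ℚ) * cc n p l)) n]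
    push_cast
    rw [Finset.sum_mul, ← Finset.sum_add_distrib]
    refine Finset.sum_congr rfl fun t ht => ?_
    unfold rho
    ring

lemma sgn_sq (p : ℕ → ℤ) (i : ℕ) (hp : p i ≠ 0) :
    ((sgn p i : ℤ) : ℚ) * ((sgn p i : ℤ) : ℚ) = 1 := by
  unfold sgn
  rcases Int.lt_or_lt_of_ne hp with h | h
  · rw [Int.sign_eq_neg_one_of_neg h]; norm_num
  · rw [Int.sign_eq_one_of_pos h]; norm_num

lemma sgn_mul_natAbs (p : ℕ → ℤ) (i : ℕ) :
    ((sgn p i : ℤ) : ℚ) * (((p i).natAbs : ℕ) : ℚ) = -((p i : ℤ) : ℚ) := by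
  have hz : (sgn p i) * ((p i).natAbs : ℤ) = -(p i) := by
    unfold sgn; rw [neg_mul, Int.sign_mul_natAbs]
  have h2 := congrArg (fun z : ℤ => (z : ℚ)) hz
  push_cast at h2 ⊢
  rw [Nat.cast_natAbs, Int.cast_abs]
  linarith [h2]

lemma perI (n : ℕ) (p : ℕ → ℤ) (hp : ∀ i, i < n → p i ≠ 0) (i : ℕ) (hi : i < n) :
    ((sgn p i : ℤ) : ℚ) * ((rho p i : ℚ) * cc n p i + ((Pr n p : ℤ) : ℚ))
      = -((∏ j ∈ (range n).erase i, p j : ℤ) : ℚ) := by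
  have hpi := hp i hi
  have hA : (((p i).natAbs : ℕ) : ℚ) ≠ 0 := by
    have := Int.natAbs_pos.mpr hpi; positivity
  have hrho : ((rho p i : ℕ) : ℚ) = (((p i).natAbs : ℕ) : ℚ) - 1 := by
    linarith [natAbs_cast_q p i hpi]
  have hPr : ((Pr n p : ℤ) : ℚ) = ((p i : ℤ) : ℚ) * ((∏ j ∈ (range n).erase i, p j : ℤ) : ℚ) := by
    rw [← Int.cast_mul]
    exact congrArg (fun z : ℤ => (z : ℚ)) (Finset.mul_prod_erase (range n) p (mem_range.mpr hi)).symm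
  have hpi' : ((p i : ℤ) : ℚ) = -(((sgn p i : ℤ) : ℚ) * (((p i).natAbs : ℕ) : ℚ)) := by
    linarith [sgn_mul_natAbs p i]
  unfold cc
  rw [hrho, hPr, hpi']
  field_simp
  push_cast
  linear_combination (-1 * (∏ j ∈ (range n).erase i, ((p j : ℤ) : ℚ))) * sgn_sq p i hpi

lemma PrT (n : ℕ) (hn : 1 ≤ n) (p : ℕ → ℤ) (hp : ∀ i, i < n → p i ≠ 0) :
    ((Pr n p : ℤ) : ℚ) *
        (∑ i ∈ range n, ((sgn p i : ℤ) : ℚ) * ((rho p i : ℚ) * cc n p i + ((Pr n p : ℤ) : ℚ)))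
      = ((-(Pr n p) * esym p 0 n (n - 1) : ℤ) : ℚ) := by
  rw [Finset.sum_congr rfl (fun i hi => perI n p hp i (mem_range.mp hi))]
  rw [esym_pred p n hn]
  push_cast
  rw [Finset.sum_neg_distrib]
  ring

end Stmt9Aux

open Stmt9Aux in
/-- The symmetrized linking matrix of `P(p₁,…,pₙ)` (`n` even) is congruent over `ℚ`
to the stated diagonal matrix. -/
theorem stmt9 (n : ℕ) (hn : 4 ≤ n) (heven : Even n) (p : ℕ → ℤ)
    (hpodd : ∀ i, i < n - 1 → Odd (p i)) (hpeven : Even (p (n - 1)))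
    (hpne : p (n - 1) ≠ 0) :
    ∃ P : Matrix (QIdx n p) (QIdx n p) ℚ, IsUnit P ∧
      Pᵀ * (linkE n p).map (fun x : ℤ => (x : ℚ)) * P =
        Matrix.diagonal (fun z => ((diagEven n p z : ℤ) : ℚ)) := by
  have hp : ∀ i, i < n → p i ≠ 0 := hp_ne_zero n hn p hpodd hpne
  have hEq : (Pm n p)ᵀ * (linkE n p).map (fun x : ℤ => (x : ℚ)) * Pm n p
      = Matrix.diagonal (fun z => ((diagEven n p z : ℤ) : ℚ)) := by
    rw [Matrix.mul_assoc, MP n p hp]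
    ext x y
    rw [Matrix.mul_apply, Fintype.sum_sum_type, ← Finset.univ_sigma_univ, Finset.sum_sigma]
    obtain (⟨i, j⟩ | u) := x <;> obtain (⟨i', k⟩ | u') := y <;>
      simp only [Matrix.transpose_apply, Pm, Pmf, Qm, Qmf, Matrix.of_apply, rho,
        Finset.univ_unique, Finset.sum_singleton, mul_zero, zero_mul, add_zero,
        Finset.sum_const_zero, zero_add]
    -- case (i,j), (i',k)
    · by_cases hii : (i:ℕ) = (i':ℕ)
      · have hii' : i = i' := Fin.ext hii
        subst hii'
        rw [Finset.sum_eq_single i ?hz1 ?hnm1]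
        case hz1 =>
          intro a _ ha
          refine Finset.sum_eq_zero fun b _ => ?_
          rw [if_neg (fun hc => ha (Fin.ext hc)), zero_mul]
        case hnm1 => intro h; exact absurd (Finset.mem_univ i) h
        simp only [eq_self_iff_true, if_true]
        have hstep : ∀ l : ℕ, vv (j:ℕ) l *
            (((sgn p (i:ℕ) : ℤ) : ℚ) * (ss ((p (i:ℕ)).natAbs - 1) (k:ℕ) + vv (k:ℕ) l))
            = ((sgn p (i:ℕ) : ℤ) : ℚ) * (vv (j:ℕ) l * vv (k:ℕ) l)
              + (((sgn p (i:ℕ) : ℤ) : ℚ) * ss ((p (i:ℕ)).natAbs - 1) (k:ℕ)) * vv (j:ℕ) l :=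
          fun l => by ring
        simp only [hstep]
        rw [Finset.sum_add_distrib, ← Finset.mul_sum, ← Finset.mul_sum]
        rw [Fin.sum_univ_eq_sum_range (fun l => vv (j:ℕ) l * vv (k:ℕ) l) ((p (i:ℕ)).natAbs - 1)]
        rw [Fin.sum_univ_eq_sum_range (fun l => vv (j:ℕ) l) ((p (i:ℕ)).natAbs - 1)]
        rw [sum_vv _ _ j.isLt]
        rw [show (∑ l ∈ Finset.range ((p (i:ℕ)).natAbs - 1), vv (j:ℕ) l * vv (k:ℕ) l)
            = (if (j:ℕ) = (k:ℕ) then (((j:ℕ):ℚ)+1) * (((j:ℕ):ℚ)+2) else 0)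
              - ss ((p (i:ℕ)).natAbs - 1) (j:ℕ) * ss ((p (i:ℕ)).natAbs - 1) (k:ℕ) from by
          have := key2 ((p (i:ℕ)).natAbs - 1) (j:ℕ) (k:ℕ) j.isLt k.isLt
          linarith]
        by_cases hjk : (j:ℕ) = (k:ℕ)
        · have hjk' : j = k := Fin.ext hjk
          subst hjk'
          rw [Matrix.diagonal_apply_eq]
          simp only [diagEven, Sum.elim_inl, sgn, if_pos rfl]
          push_cast
          ring
        · have hne : (Sum.inl ⟨i, j⟩ : QIdx n p) ≠ Sum.inl ⟨i, k⟩ := by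
            intro hc
            injection hc with hs
            injection hs with h1 h2
            exact hjk (congrArg Fin.val h2)
          rw [Matrix.diagonal_apply_ne _ hne, if_neg hjk]
          ring
      · have hne : (Sum.inl ⟨i, j⟩ : QIdx n p) ≠ Sum.inl ⟨i', k⟩ := by
          intro hc
          injection hc with hs
          injection hs with h1 h2
          exact hii (congrArg Fin.val h1)
        rw [Matrix.diagonal_apply_ne _ hne]
        refine Finset.sum_eq_zero fun a _ => Finset.sum_eq_zero fun b _ => ?_
        by_cases h : (a:ℕ) = (i:ℕ)
        · rw [if_neg (by omega : ¬ (a:ℕ) = (i':ℕ)), mul_zero]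
        · rw [if_neg h, zero_mul]
    -- case (i,j), γ
    · rw [Matrix.diagonal_apply_ne _ Sum.inl_ne_inr]
    -- case γ, (i',k)
    · rw [Matrix.diagonal_apply_ne _ Sum.inr_ne_inl]
      rw [Finset.sum_eq_single i' ?hz3 ?hnm3]
      case hz3 =>
        intro a _ ha
        refine Finset.sum_eq_zero fun b _ => ?_
        rw [if_neg (fun hc => ha (Fin.ext hc)), mul_zero]
      case hnm3 => intro h; exact absurd (Finset.mem_univ i') h
      simp only [eq_self_iff_true, if_true]
      have hstep : ∀ l : ℕ, cc n p (i':ℕ) *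
          (((sgn p (i':ℕ) : ℤ) : ℚ) * (ss ((p (i':ℕ)).natAbs - 1) (k:ℕ) + vv (k:ℕ) l))
          = cc n p (i':ℕ) * ((sgn p (i':ℕ) : ℤ) : ℚ) * ss ((p (i':ℕ)).natAbs - 1) (k:ℕ)
            + cc n p (i':ℕ) * ((sgn p (i':ℕ) : ℤ) : ℚ) * vv (k:ℕ) l := fun l => by ring
      simp only [hstep]
      rw [Finset.sum_add_distrib, Finset.sum_const, Finset.card_univ, Fintype.card_fin,
        nsmul_eq_mul, ← Finset.mul_sum]
      rw [Fin.sum_univ_eq_sum_range (fun l => vv (k:ℕ) l) ((p (i':ℕ)).natAbs - 1)]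
      rw [sum_vv _ _ k.isLt]
      have hA : (((p (i':ℕ)).natAbs : ℕ) : ℚ) ≠ 0 := by
        have := Int.natAbs_pos.mpr (hp (i':ℕ) i'.isLt); positivity
      have hcast := natAbs_cast_q p (i':ℕ) (hp (i':ℕ) i'.isLt)
      unfold rho at hcast
      rw [show ((((p (i':ℕ)).natAbs - 1 : ℕ)) : ℚ) = (((p (i':ℕ)).natAbs : ℕ) : ℚ) - 1 from by
        linarith]
      unfold cc
      field_simp
      ring
    -- case γ, γ
    · rw [Matrix.diagonal_apply_eq]
      simp only [diagEven, Sum.elim_inr]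
      have hPrT := PrT n (by omega) p hp
      simp only [rho] at hPrT
      rw [hPrT]
      unfold Pr
      rfl
  have hd : ∀ z : QIdx n p, ((diagEven n p z : ℤ) : ℚ) ≠ 0 := by
    intro z
    rw [Int.cast_ne_zero]
    obtain (⟨i, k⟩ | u) := z
    · simp only [diagEven, Sum.elim_inl]
      have h1 : (p (i:ℕ)).sign ≠ 0 := fun hc => hp _ i.isLt (Int.sign_eq_zero_iff_zero.mp hc)
      have h2 : ((k:ℕ):ℤ) + 1 ≠ 0 := by positivity
      have h3 : ((k:ℕ):ℤ) + 2 ≠ 0 := by positivity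
      exact mul_ne_zero (mul_ne_zero (neg_ne_zero.mpr h1) h2) h3
    · simp only [diagEven, Sum.elim_inr]
      refine mul_ne_zero (neg_ne_zero.mpr ?_) (esym_ne_zero n (by omega) p hpodd hpeven)
      exact Finset.prod_ne_zero_iff.mpr fun t ht => hp t (Finset.mem_range.mp ht)
  have hdet : (Pm n p).det ≠ 0 := by
    intro h0
    have hdd := congrArg Matrix.det hEq
    rw [Matrix.det_mul, Matrix.det_mul, Matrix.det_transpose, Matrix.det_diagonal, h0] at hdd
    simp only [zero_mul, mul_zero] at hdd
    exact (Finset.prod_ne_zero_iff.mpr fun z _ => hd z) hdd.symm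
  exact ⟨Pm n p, (Matrix.isUnit_iff_isUnit_det _).mpr (isUnit_iff_ne_zero.mpr hdet), hEq⟩
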